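/- Let S₁ and S₂ be sufficiently saturated models of a complete CLO theory T and let Φ ∈ IT(T). Then the L_κ-structures Φ(S₁) and Φ(S₂) are back-and-forth equivalent; in particular, they are elementarily equivalent. -/

import Mathlib

open FirstOrder Language Set

/-- Relation symbols of the language `L_κ` of colored linear orders:
a binary `<` and a unary color predicate for each `i : ι`. -/
inductive CLORel (ι : Type) : ℕ → Type
  | lt : CLORel ι 2
  | color (i : ι) : CLORel ι 1

/-- The language `L_κ`, where the colors are indexed by `ι`. -/
def CLOLang (ι : Type) : Language :=
  ⟨fun _ => Empty, CLORel ι⟩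

/-- Interpretation of the relation symbols on a linear order `M` with colors `c`. -/
def cloRelMap {ι M : Type} [LinearOrder M] (c : ι → Set M) :
    ∀ {n}, CLORel ι n → (Fin n → M) → Prop
  | _, .lt => fun v => v 0 < v 1
  | _, .color i => fun v => v 0 ∈ c i

/-- The canonical `L_κ`-structure (a colored linear order, CLO) on a linear
order `M` whose colors are given by `c : ι → Set M`. -/
def CLOStr (ι M : Type) [LinearOrder M] (c : ι → Set M) : (CLOLang ι).Structure M where
  funMap := fun f => Empty.elim f
  RelMap := cloRelMap c

/-- Satisfaction of an `L_κ`-formula in the CLO `(M, <, c)`. -/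
def Sat {ι : Type} (M : Type) [LinearOrder M] (c : ι → Set M) {α : Type}
    (φ : (CLOLang ι).Formula α) (v : α → M) : Prop :=
  letI := CLOStr ι M c
  φ.Realize v

/-- The induced colors on a subset of a CLO. -/
def subColor {ι M : Type} (c : ι → Set M) (s : Set M) : ι → Set s :=
  fun i => {x | (x : M) ∈ c i}

/-- Elementary equivalence of CLOs. -/
def CLOEquiv (ι : Type) (M : Type) [LinearOrder M] (cM : ι → Set M)
    (N : Type) [LinearOrder N] (cN : ι → Set N) : Prop :=
  letI := CLOStr ι M cM
  letI := CLOStr ι N cN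
  M ≅[CLOLang ι] N

/-- Isomorphism of CLOs (as `L_κ`-structures). -/
def CLOIso (ι : Type) (M : Type) [LinearOrder M] (cM : ι → Set M)
    (N : Type) [LinearOrder N] (cN : ι → Set N) : Prop :=
  letI := CLOStr ι M cM
  letI := CLOStr ι N cN
  Nonempty (M ≃[CLOLang ι] N)

/-- The complete theory of a CLO. -/
def CLOTheory (ι : Type) (M : Type) [LinearOrder M] (c : ι → Set M) : (CLOLang ι).Theory :=
  letI := CLOStr ι M c
  (CLOLang ι).completeTheory M

/-- The induced colors on a lexicographic sum `Σₗ i, A i` of CLOs. -/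
def sigmaColor {ι I : Type} {A : I → Type} (c : ∀ i, ι → Set (A i)) :
    ι → Set (Σₗ i, A i) :=
  fun k => {x | (ofLex x).2 ∈ c (ofLex x).1 k}

/-- The induced colors on a two-term lexicographic sum `α ⊕ₗ β` of CLOs. -/
def sumColor2 {ι α β : Type} (ca : ι → Set α) (cb : ι → Set β) : ι → Set (α ⊕ₗ β) :=
  fun k => {x | Sum.elim (· ∈ ca k) (· ∈ cb k) (ofLex x)}

/-- The set defined by a parameter-free formula in one variable in a CLO. -/
def FmlSet (ι : Type) (M : Type) [LinearOrder M] (c : ι → Set M)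
    (φ : (CLOLang ι).Formula Unit) : Set M :=
  {x | Sat M c φ fun _ => x}

/-- A CLO is self-additive if it has more than one point and its only
convex parameter-free-definable subsets are `∅` and the whole order. -/
def SelfAdditive (ι : Type) (M : Type) [LinearOrder M] (c : ι → Set M) : Prop :=
  Nontrivial M ∧
    ∀ φ : (CLOLang ι).Formula Unit, (FmlSet ι M c φ).OrdConnected →
      FmlSet ι M c φ = ∅ ∨ FmlSet ι M c φ = Set.univ

/-- `a ∼ b`: some set definable with parameter `a` is convex, bounded above and
below, and contains both `a` and `b`. -/
def SimRel (ι : Type) {M : Type} [LinearOrder M] (c : ι → Set M) (a b : M) : Prop :=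
  ∃ φ : (CLOLang ι).Formula (Unit ⊕ Unit),
    (Set.OrdConnected {x | Sat M c φ (Sum.elim (fun _ => x) fun _ => a)}) ∧
    (∃ u : M, ∀ z ∈ {x | Sat M c φ (Sum.elim (fun _ => x) fun _ => a)}, z < u) ∧
    (∃ l : M, ∀ z ∈ {x | Sat M c φ (Sum.elim (fun _ => x) fun _ => a)}, l < z) ∧
    a ∈ {x | Sat M c φ (Sum.elim (fun _ => x) fun _ => a)} ∧
    b ∈ {x | Sat M c φ (Sum.elim (fun _ => x) fun _ => a)}

/-- `f : M → N` is an elementary map of CLOs. -/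
def IsElemMap (ι : Type) {M N : Type} [LinearOrder M] [LinearOrder N]
    (cM : ι → Set M) (cN : ι → Set N) (f : M → N) : Prop :=
  ∀ (k : ℕ) (φ : (CLOLang ι).Formula (Fin k)) (v : Fin k → M),
    Sat M cM φ v ↔ Sat N cN φ (f ∘ v)

/-- A subset of a CLO, with its induced structure, is an elementary substructure. -/
def IsElemSubset (ι : Type) (B : Type) [LinearOrder B] (cB : ι → Set B) (s : Set B) : Prop :=
  IsElemMap ι (subColor cB s) cB (Subtype.val : s → B)

/-- A complete `L_κ`-theory is ℵ₀-categorical: any two at-most-countable CLO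
models of it are isomorphic.  (Finite and empty models are allowed.) -/
def Aleph0CatTheory (ι : Type) (T : (CLOLang ι).Theory) : Prop :=
  ∀ (N₁ N₂ : Type) (i₁ : LinearOrder N₁) (i₂ : LinearOrder N₂)
    (c₁ : ι → Set N₁) (c₂ : ι → Set N₂),
    Countable N₁ → Countable N₂ →
    (letI := i₁; CLOTheory ι N₁ c₁) = T → (letI := i₂; CLOTheory ι N₂ c₂) = T →
    (letI := i₁; letI := i₂; CLOIso ι N₁ c₁ N₂ c₂)

/-- `φ` is a convex formula for the complete theory of the CLO `(M₀, c₀)`: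
its realizations in every model of that theory form a convex set. -/
def ConvexFml (ι : Type) (M₀ : Type) [LinearOrder M₀] (c₀ : ι → Set M₀)
    (φ : (CLOLang ι).Formula Unit) : Prop :=
  ∀ (B : Type) (iB : LinearOrder B) (cB : ι → Set B),
    (letI := iB; CLOEquiv ι B cB M₀ c₀) → (letI := iB; Set.OrdConnected (FmlSet ι B cB φ))

/-- The set of common realizations of a set of one-variable formulas in a CLO. -/
def TypeSet (ι : Type) (M : Type) [LinearOrder M] (c : ι → Set M)
    (Φ : Set ((CLOLang ι).Formula Unit)) : Set M :=
  {x | ∀ φ ∈ Φ, Sat M c φ fun _ => x}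

/-- A set of one-variable formulas is consistent with the complete theory of
`(M₀, c₀)`: it is realized in some model of that theory. -/
def TypeConsistent (ι : Type) (M₀ : Type) [LinearOrder M₀] (c₀ : ι → Set M₀)
    (Φ : Set ((CLOLang ι).Formula Unit)) : Prop :=
  ∃ (B : Type) (iB : LinearOrder B) (cB : ι → Set B),
    (letI := iB; CLOEquiv ι B cB M₀ c₀) ∧ (letI := iB; ∃ b : B, b ∈ TypeSet ι B cB Φ)

/-- `Φ` is a convex type of the complete theory of `(M₀, c₀)`: a maximal
consistent set of convex formulas over `∅`.  `IT(T)` is the set of all such. -/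
def IsConvexType (ι : Type) (M₀ : Type) [LinearOrder M₀] (c₀ : ι → Set M₀)
    (Φ : Set ((CLOLang ι).Formula Unit)) : Prop :=
  (∀ φ ∈ Φ, ConvexFml ι M₀ c₀ φ) ∧ TypeConsistent ι M₀ c₀ Φ ∧
    ∀ ψ, ConvexFml ι M₀ c₀ ψ → TypeConsistent ι M₀ c₀ (insert ψ Φ) → ψ ∈ Φ

/-- A convex type is isolated if it contains a convex formula contained in no
other convex type. -/
def IsolatedCT (ι : Type) (M₀ : Type) [LinearOrder M₀] (c₀ : ι → Set M₀)
    (Φ : Set ((CLOLang ι).Formula Unit)) : Prop :=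
  ∃ φ ∈ Φ, ConvexFml ι M₀ c₀ φ ∧
    ∀ Ψ, IsConvexType ι M₀ c₀ Ψ → φ ∈ Ψ → Ψ = Φ

/-- A CLO is ℵ₀-saturated: every finitely-satisfiable set of formulas in one
variable over finitely many parameters is realized. -/
def Aleph0Saturated (ι : Type) (S : Type) [LinearOrder S] (cS : ι → Set S) : Prop :=
  ∀ (m : ℕ) (a : Fin m → S) (p : Set ((CLOLang ι).Formula (Unit ⊕ Fin m))),
    (∀ q : Finset ((CLOLang ι).Formula (Unit ⊕ Fin m)), ↑q ⊆ p →
      ∃ x : S, ∀ φ ∈ q, Sat S cS φ (Sum.elim (fun _ => x) a)) →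
    ∃ x : S, ∀ φ ∈ p, Sat S cS φ (Sum.elim (fun _ => x) a)

/-- A CLO is strongly ℵ₀-homogeneous: finite tuples with the same complete type
are conjugate under an automorphism. -/
def StronglyAleph0Homogeneous (ι : Type) (S : Type) [LinearOrder S] (cS : ι → Set S) : Prop :=
  ∀ (m : ℕ) (a b : Fin m → S),
    (∀ φ : (CLOLang ι).Formula (Fin m), Sat S cS φ a ↔ Sat S cS φ b) →
    ∃ g : S ≃ S, (∀ x y : S, x < y ↔ g x < g y) ∧
      (∀ (k : ι) (x : S), x ∈ cS k ↔ g x ∈ cS k) ∧ ∀ i, g (a i) = b i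

/-- Sufficiently saturated: ℵ₀-saturated and strongly ℵ₀-homogeneous. -/
def SuffSaturated (ι : Type) (S : Type) [LinearOrder S] (cS : ι → Set S) : Prop :=
  Aleph0Saturated ι S cS ∧ StronglyAleph0Homogeneous ι S cS

/-- The complete theory of `(M₀, c₀)` is locally simple: for every sufficiently
saturated model `S` and every convex type `Φ`, the theory `T_Φ = Th(Φ(S))` is
ℵ₀-categorical. -/
def LocallySimple (ι : Type) (M₀ : Type) [LinearOrder M₀] (c₀ : ι → Set M₀) : Prop :=
  ∀ (S : Type) [LinearOrder S], ∀ (cS : ι → Set S),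
    CLOEquiv ι S cS M₀ c₀ → SuffSaturated ι S cS →
    ∀ Φ, IsConvexType ι M₀ c₀ Φ →
      Aleph0CatTheory ι
        (CLOTheory ι (TypeSet ι S cS Φ) (subColor cS (TypeSet ι S cS Φ)))

/-- A finite set of pairs is a partial isomorphism of CLOs: it preserves `<`,
equality, and each color, in both directions. -/
def IsPartialIso (ι : Type) {M N : Type} [LinearOrder M] [LinearOrder N]
    (cM : ι → Set M) (cN : ι → Set N) (f : Finset (M × N)) : Prop :=
  ∀ p ∈ f, ∀ q ∈ f,
    (p.1 < q.1 ↔ p.2 < q.2) ∧ (p.1 = q.1 ↔ p.2 = q.2) ∧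
    ∀ k, p.1 ∈ cM k ↔ p.2 ∈ cN k

/-- Back-and-forth equivalence of CLOs: a nonempty family of finite partial
isomorphisms with the back-and-forth extension properties. -/
def BackForthEquiv (ι : Type) (M : Type) [LinearOrder M] (cM : ι → Set M)
    (N : Type) [LinearOrder N] (cN : ι → Set N) : Prop :=
  ∃ F : Set (Finset (M × N)), F.Nonempty ∧ (∀ f ∈ F, IsPartialIso ι cM cN f) ∧
    (∀ f ∈ F, ∀ m : M, ∃ g ∈ F, f ⊆ g ∧ ∃ n : N, (m, n) ∈ g) ∧
    (∀ f ∈ F, ∀ n : N, ∃ g ∈ F, f ⊆ g ∧ ∃ m : M, (m, n) ∈ g)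

/-- The set of complete theories `Th(Φ(A))` as `A` ranges over models of the
complete theory of `(M₀, c₀)` (including the theory of the empty structure,
in case `Φ` is omitted). -/
def TheoriesAt (ι : Type) (M₀ : Type) [LinearOrder M₀] (c₀ : ι → Set M₀)
    (Φ : Set ((CLOLang ι).Formula Unit)) : Set ((CLOLang ι).Theory) :=
  {T | ∃ (A : Type) (iA : LinearOrder A) (cA : ι → Set A),
    (letI := iA; CLOEquiv ι A cA M₀ c₀) ∧
    T = (letI := iA; CLOTheory ι (TypeSet ι A cA Φ) (subColor cA (TypeSet ι A cA Φ)))}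
/-!
Call a finite partial map between two CLOs type-preserving if the tuple it maps and its image
realize the same complete type over `∅` in the ambient models. When the ambient models are
elementarily equivalent and `ℵ₀`-saturated, every type-preserving map extends to any new point:
the type of the extended tuple is finitely satisfiable over the image, hence realized. Membership
in `Φ(S)` is read off the type of a point, so the type-preserving maps between `Φ(S₁)` and
`Φ(S₂)` form a back-and-forth system, and a back-and-forth system yields elementary equivalence
by induction on formulas.
-/

section BackAndForth

variable {ι M N : Type} [LinearOrder M] [LinearOrder N] {cM : ι → Set M} {cN : ι → Set N}

lemma sat_relabel {α β : Type} (φ : (CLOLang ι).Formula α) (g : α → β) (v : β → M) :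
    Sat M cM (φ.relabel g) v ↔ Sat M cM φ (v ∘ g) := by
  let _ := CLOStr ι M cM
  exact Formula.realize_relabel

lemma sat_not {α : Type} (φ : (CLOLang ι).Formula α) (v : α → M) :
    Sat M cM φ.not v ↔ ¬ Sat M cM φ v := by
  let _ := CLOStr ι M cM
  exact Formula.realize_not

lemma sat_iInf {α β : Type} [Finite β] (f : β → (CLOLang ι).Formula α) (v : α → M) :
    Sat M cM (Formula.iInf f) v ↔ ∀ i, Sat M cM (f i) v := by
  let _ := CLOStr ι M cM
  exact Formula.realize_iInf

lemma sat_iExs_unit {α : Type} (φ : (CLOLang ι).Formula (Unit ⊕ α)) (v : α → M) :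
    Sat M cM ((φ.relabel Sum.swap).iExs Unit) v ↔
      ∃ m, Sat M cM φ (Sum.elim (fun _ => m) v) := by
  let _ := CLOStr ι M cM
  simp only [Sat, Formula.realize_iExs, Formula.realize_relabel, Sum.elim_swap]
  exact ⟨fun ⟨i, hi⟩ => ⟨i (), hi⟩, fun ⟨m, hm⟩ => ⟨fun _ => m, hm⟩⟩

def SameType {α : Type} (cM : ι → Set M) (cN : ι → Set N) (a : α → M) (b : α → N) :
    Prop :=
  ∀ φ : (CLOLang ι).Formula α, Sat M cM φ a ↔ Sat N cN φ b

lemma sameType_of_cloEquiv (h : CLOEquiv ι M cM N cN) {α : Type} [IsEmpty α]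
    (a : α → M) (b : α → N) : SameType cM cN a b := by
  let _ := CLOStr ι M cM
  let _ := CLOStr ι N cN
  intro φ
  have hφ := elementarilyEquivalent_iff.1 h (φ.relabel isEmptyElim)
  simp only [Sentence.Realize, Formula.realize_relabel] at hφ
  rwa [Subsingleton.elim (default ∘ isEmptyElim) a, Subsingleton.elim (default ∘ isEmptyElim) b]
    at hφ

namespace SameType

variable {α : Type} {a : α → M} {b : α → N}

lemma symm (h : SameType cM cN a b) : SameType cN cM b a :=
  fun φ => (h φ).symm

lemma comp (h : SameType cM cN a b) {β : Type} (g : β → α) :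
    SameType cM cN (a ∘ g) (b ∘ g) :=
  fun φ => by rw [← sat_relabel, ← sat_relabel]; exact h _

lemma lt_iff (h : SameType cM cN a b) (i j : α) : a i < a j ↔ b i < b j :=
  h (Relations.formula₂ CLORel.lt (Term.var i) (Term.var j))

lemma eq_iff (h : SameType cM cN a b) (i j : α) : a i = a j ↔ b i = b j :=
  h (Term.equal (Term.var i) (Term.var j))

lemma mem_color_iff (h : SameType cM cN a b) (k : ι) (i : α) : a i ∈ cM k ↔ b i ∈ cN k :=
  h (Relations.formula₁ (CLORel.color k) (Term.var i))

lemma mem_typeSet_iff {m : M} {n : N} (h : SameType cM cN (fun _ : Unit => m) fun _ => n)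
    (Φ : Set ((CLOLang ι).Formula Unit)) :
    m ∈ TypeSet ι M cM Φ ↔ n ∈ TypeSet ι N cN Φ :=
  forall₂_congr fun φ _ => h φ

lemma exists_sat (h : SameType cM cN a b) {φ : (CLOLang ι).Formula (Unit ⊕ α)} {m : M}
    (hm : Sat M cM φ (Sum.elim (fun _ => m) a)) : ∃ n, Sat N cN φ (Sum.elim (fun _ => n) b) :=
  (sat_iExs_unit φ b).1 ((h _).1 ((sat_iExs_unit φ a).2 ⟨m, hm⟩))

end SameType

lemma Aleph0Saturated.exists_sameType_sumElim (hN : Aleph0Saturated ι N cN) {k : ℕ}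
    {a : Fin k → M} {b : Fin k → N} (h : SameType cM cN a b) (m : M) :
    ∃ n, SameType cM cN (Sum.elim (fun _ : Unit => m) a) (Sum.elim (fun _ => n) b) := by
  obtain ⟨n, hn⟩ := hN k b {φ | Sat M cM φ (Sum.elim (fun _ => m) a)} fun q hq => by
    obtain ⟨n, hn⟩ := h.exists_sat (φ := Formula.iInf fun φ : q => φ.1)
      ((sat_iInf _ _).2 fun φ => hq φ.2)
    exact ⟨n, fun φ hφ => (sat_iInf _ _).1 hn ⟨φ, hφ⟩⟩
  refine ⟨n, fun φ => ⟨hn φ, fun hφ => ?_⟩⟩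
  by_contra hφ'
  exact (sat_not _ _).1 (hn φ.not ((sat_not _ _).2 hφ')) hφ

lemma Aleph0Saturated.exists_sameType_snoc (hN : Aleph0Saturated ι N cN) {k : ℕ}
    {a : Fin k → M} {b : Fin k → N} (h : SameType cM cN a b) (m : M) :
    ∃ n, SameType cM cN (Fin.snoc a m : Fin (k + 1) → M) (Fin.snoc b n) := by
  obtain ⟨n, hn⟩ := hN.exists_sameType_sumElim h m
  let g : Fin (k + 1) → Unit ⊕ Fin k := Fin.lastCases (Sum.inl ()) Sum.inr
  have hg : ∀ {X : Type} (x : X) (v : Fin k → X),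
      Sum.elim (fun _ => x) v ∘ g = (Fin.snoc v x : Fin (k + 1) → X) := by
    intro X x v
    funext i
    refine Fin.lastCases ?_ (fun i => ?_) i <;> simp [g]
  exact ⟨n, by simpa only [hg] using hn.comp g⟩

def typePreservingMaps (cM : ι → Set M) (cN : ι → Set N) (A : Set M) (B : Set N) :
    Set (Finset (A × B)) :=
  {f | ∃ (k : ℕ) (a : Fin k → A) (b : Fin k → B),
    SameType cM cN (Subtype.val ∘ a) (Subtype.val ∘ b) ∧ ↑f = Set.range fun i => (a i, b i)}

variable {A : Set M} {B : Set N}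

lemma isPartialIso_of_mem_typePreservingMaps {f : Finset (A × B)}
    (hf : f ∈ typePreservingMaps cM cN A B) :
    IsPartialIso ι (subColor cM A) (subColor cN B) f := by
  obtain ⟨k, a, b, h, hf⟩ := hf
  intro p hp q hq
  obtain ⟨i, rfl⟩ : p ∈ Set.range fun i => (a i, b i) := hf ▸ hp
  obtain ⟨j, rfl⟩ : q ∈ Set.range fun i => (a i, b i) := hf ▸ hq
  exact ⟨h.lt_iff i j, by simpa only [Subtype.ext_iff, Function.comp_apply] using h.eq_iff i j,
    fun l => h.mem_color_iff l i⟩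

lemma exists_snoc_mem_typePreservingMaps {f : Finset (A × B)} {k : ℕ} {a : Fin k → A}
    {b : Fin k → B} (hf : ↑f = Set.range fun i => (a i, b i)) {m : A} {n : B}
    (h : SameType cM cN (Subtype.val ∘ Fin.snoc a m) (Subtype.val ∘ Fin.snoc b n)) :
    ∃ g ∈ typePreservingMaps cM cN A B, f ⊆ g ∧ (m, n) ∈ g := by
  let e := fun i : Fin (k + 1) => ((Fin.snoc a m : Fin (k + 1) → A) i, (Fin.snoc b n : _ → B) i)
  refine ⟨(Set.finite_range e).toFinset,
    ⟨k + 1, _, _, h, Set.Finite.coe_toFinset _⟩, ?_, ?_⟩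
  · intro p hp
    obtain ⟨i, rfl⟩ : p ∈ Set.range fun i => (a i, b i) := hf ▸ hp
    exact (Set.Finite.mem_toFinset _).2 ⟨i.castSucc, by simp [e]⟩
  · exact (Set.Finite.mem_toFinset _).2 ⟨Fin.last k, by simp [e]⟩

lemma Aleph0Saturated.exists_sameType_snoc_mem (hN : Aleph0Saturated ι N cN)
    (hAB : ∀ m n, SameType cM cN (fun _ : Unit => m) (fun _ => n) → (m ∈ A ↔ n ∈ B))
    {k : ℕ} {a : Fin k → A} {b : Fin k → B}
    (h : SameType cM cN (Subtype.val ∘ a) (Subtype.val ∘ b)) (m : A) :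
    ∃ n : B, SameType cM cN (Subtype.val ∘ Fin.snoc a m) (Subtype.val ∘ Fin.snoc b n) := by
  obtain ⟨n, hn⟩ := hN.exists_sameType_snoc h m
  have hmn : SameType cM cN (fun _ : Unit => (m : M)) fun _ => n := by
    simpa [Function.comp_def] using hn.comp fun _ : Unit => Fin.last k
  have hnB : n ∈ B := (hAB m n hmn).1 m.2
  exact ⟨⟨n, hnB⟩, by rwa [Fin.comp_snoc, Fin.comp_snoc]⟩

theorem backForthEquiv_of_aleph0Saturated (hMN : CLOEquiv ι M cM N cN)
    (hM : Aleph0Saturated ι M cM) (hN : Aleph0Saturated ι N cN)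
    (hAB : ∀ m n, SameType cM cN (fun _ : Unit => m) (fun _ => n) → (m ∈ A ↔ n ∈ B)) :
    BackForthEquiv ι A (subColor cM A) B (subColor cN B) := by
  refine ⟨typePreservingMaps cM cN A B,
    ⟨∅, 0, Fin.elim0, Fin.elim0, sameType_of_cloEquiv hMN _ _, by simp⟩,
    fun f hf => isPartialIso_of_mem_typePreservingMaps hf, ?_, ?_⟩
  · rintro f ⟨k, a, b, h, hf⟩ m
    obtain ⟨n, hn⟩ := hN.exists_sameType_snoc_mem hAB h m
    obtain ⟨g, hg, hfg, hmn⟩ := exists_snoc_mem_typePreservingMaps hf hn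
    exact ⟨g, hg, hfg, n, hmn⟩
  · rintro f ⟨k, a, b, h, hf⟩ n
    obtain ⟨m, hm⟩ := hM.exists_sameType_snoc_mem (fun n m h => (hAB m n h.symm).symm) h.symm n
    obtain ⟨g, hg, hfg, hmn⟩ := exists_snoc_mem_typePreservingMaps hf hm.symm
    exact ⟨g, hg, hfg, m, hmn⟩

lemma exists_eq_var {n : ℕ} (t : (CLOLang ι).Term (Empty ⊕ Fin n)) :
    ∃ i, t = Term.var (Sum.inr i) := by
  rcases t with (e | i) | ⟨f, _⟩
  exacts [e.elim, ⟨i, rfl⟩, f.elim]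

lemma realize_iff_of_backForth {F : Set (Finset (M × N))}
    (hiso : ∀ f ∈ F, IsPartialIso ι cM cN f)
    (hforth : ∀ f ∈ F, ∀ m : M, ∃ g ∈ F, f ⊆ g ∧ ∃ n : N, (m, n) ∈ g)
    (hback : ∀ f ∈ F, ∀ n : N, ∃ g ∈ F, f ⊆ g ∧ ∃ m : M, (m, n) ∈ g)
    {l : ℕ} (φ : (CLOLang ι).BoundedFormula Empty l) :
    ∀ f ∈ F, ∀ (x : Fin l → M) (y : Fin l → N), (∀ i, (x i, y i) ∈ f) →
      ((letI := CLOStr ι M cM; φ.Realize default x) ↔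
        (letI := CLOStr ι N cN; φ.Realize default y)) := by
  induction φ with
  | falsum => exact fun _ _ _ _ _ => Iff.rfl
  | equal t₁ t₂ =>
    intro f hf x y hxy
    obtain ⟨i, rfl⟩ := exists_eq_var t₁
    obtain ⟨j, rfl⟩ := exists_eq_var t₂
    exact (hiso f hf _ (hxy i) _ (hxy j)).2.1
  | rel R ts =>
    intro f hf x y hxy
    choose σ hσ using fun i => exists_eq_var (ts i)
    obtain rfl : ts = _ := funext hσ
    cases R with
    | lt => exact (hiso f hf _ (hxy (σ 0)) _ (hxy (σ 1))).1
    | color k => exact (hiso f hf _ (hxy (σ 0)) _ (hxy (σ 0))).2.2 k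
  | imp φ ψ ihφ ihψ =>
    intro f hf x y hxy
    exact imp_congr (ihφ f hf x y hxy) (ihψ f hf x y hxy)
  | @all l φ ih =>
    intro f hf x y hxy
    have hsnoc : ∀ {g}, f ⊆ g → ∀ {m n}, (m, n) ∈ g → ∀ i,
        ((Fin.snoc x m : Fin (l + 1) → M) i, (Fin.snoc y n : Fin (l + 1) → N) i) ∈ g :=
      fun hfg _ _ hmn i => Fin.lastCases (by simpa using hmn)
        (fun i => by simpa using hfg (hxy i)) i
    constructor
    · intro hx n
      obtain ⟨g, hg, hfg, m, hmn⟩ := hback f hf n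
      exact (ih g hg _ _ (hsnoc hfg hmn)).1 (hx m)
    · intro hy m
      obtain ⟨g, hg, hfg, n, hmn⟩ := hforth f hf m
      exact (ih g hg _ _ (hsnoc hfg hmn)).2 (hy n)

theorem BackForthEquiv.cloEquiv (h : BackForthEquiv ι M cM N cN) : CLOEquiv ι M cM N cN := by
  obtain ⟨F, ⟨f, hf⟩, hiso, hforth, hback⟩ := h
  let _ := CLOStr ι M cM
  let _ := CLOStr ι N cN
  exact elementarilyEquivalent_iff.2 fun φ =>
    realize_iff_of_backForth hiso hforth hback φ f hf default default finZeroElim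

end BackAndForth

theorem stmt11_general {ι : Type} {S₁ S₂ : Type} [LinearOrder S₁] [LinearOrder S₂]
    (c₁ : ι → Set S₁) (c₂ : ι → Set S₂) (hT : CLOEquiv ι S₁ c₁ S₂ c₂)
    (hsat₁ : SuffSaturated ι S₁ c₁) (hsat₂ : SuffSaturated ι S₂ c₂)
    (Φ : Set ((CLOLang ι).Formula Unit)) :
    BackForthEquiv ι (↥(TypeSet ι S₁ c₁ Φ)) (subColor c₁ (TypeSet ι S₁ c₁ Φ))
        (↥(TypeSet ι S₂ c₂ Φ)) (subColor c₂ (TypeSet ι S₂ c₂ Φ)) ∧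
      CLOEquiv ι (↥(TypeSet ι S₁ c₁ Φ)) (subColor c₁ (TypeSet ι S₁ c₁ Φ))
        (↥(TypeSet ι S₂ c₂ Φ)) (subColor c₂ (TypeSet ι S₂ c₂ Φ)) := by
  have h := backForthEquiv_of_aleph0Saturated hT hsat₁.1 hsat₂.1 fun _ _ hmn =>
    hmn.mem_typeSet_iff Φ
  exact ⟨h, h.cloEquiv⟩

theorem stmt11 {ι : Type} [Countable ι] {S₁ S₂ : Type} [LinearOrder S₁] [LinearOrder S₂]
    (c₁ : ι → Set S₁) (c₂ : ι → Set S₂) (hT : CLOEquiv ι S₁ c₁ S₂ c₂)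
    (hsat₁ : SuffSaturated ι S₁ c₁) (hsat₂ : SuffSaturated ι S₂ c₂)
    (Φ : Set ((CLOLang ι).Formula Unit)) (hΦ : IsConvexType ι S₁ c₁ Φ) :
    BackForthEquiv ι (↥(TypeSet ι S₁ c₁ Φ)) (subColor c₁ (TypeSet ι S₁ c₁ Φ))
        (↥(TypeSet ι S₂ c₂ Φ)) (subColor c₂ (TypeSet ι S₂ c₂ Φ)) ∧
      CLOEquiv ι (↥(TypeSet ι S₁ c₁ Φ)) (subColor c₁ (TypeSet ι S₁ c₁ Φ))
        (↥(TypeSet ι S₂ c₂ Φ)) (subColor c₂ (TypeSet ι S₂ c₂ Φ)) :=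
  stmt11_general c₁ c₂ hT hsat₁ hsat₂ Φ
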